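/- arXiv:2502.18109 — 3 statements merged into one kernel-verified Lean document; each statement's English description precedes it below -/
import Mathlib

section
/- For distinct a, b ∈ 𝔹², the Hilbert distance h(a,b) equals log H, where H = [Re((1 − a·conj(b))²) + |a−b|² + 2·Re(1 − a·conj(b))·√(|a−b|² − (Im(a·conj(b)))²)] / [(1−|a|²)(1−|b|²)]. -/
/-!
Parametrise the line through `a` and `b` as `t ↦ a + t (b - a)`. It meets the unit circle at the
roots `t₁ < 0 < 1 < t₂` of the quadratic `‖a + t (b - a)‖² - 1`, and the ratio defining `h(a, b)`
is `X / Y` with `X = α (1 - t₁) t₂`, `Y = α (-t₁) (t₂ - 1)`, `α = ‖b - a‖²`. Evaluating the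
quadratic at `t = 0, 1` gives `X + Y = 2R` with `R = 1 - ⟪a, b⟫` and `X Y = (1 - ‖a‖²)(1 - ‖b‖²)`,
so `X = R + √(R² - X Y)` and `X / Y = X² / (X Y)`. In `ℂ`, `⟪a, b⟫ = Re (a b̄)` and
`R² - X Y = ‖a - b‖² - Im (a b̄)²`.
-/

open Complex ComplexConjugate

/-- The line through two points `a`, `b` in the complex plane. -/
noncomputable def lineThrough (a b : ℂ) : Set ℂ :=
  {z : ℂ | ∃ t : ℝ, z = a + (t : ℂ) * (b - a)}

/-- The Hilbert metric of the unit disk: for `a ≠ b`,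
`h(a,b) = log (|u-b||a-v| / (|u-a||b-v|))` where `u, v` are the intersection
points of the line through `a, b` with the unit circle, ordered so that
`|u-a| < |u-b|` (equivalently `|v-b| < |v-a|`). For `a = b` the defining set
is empty and `sSup ∅ = 0`. -/
noncomputable def hilbertDist (a b : ℂ) : ℝ :=
  sSup { d : ℝ | ∃ u v : ℂ, ‖u‖ = 1 ∧ ‖v‖ = 1 ∧
    u ∈ lineThrough a b ∧ v ∈ lineThrough a b ∧
    dist u a < dist u b ∧ dist v b < dist v a ∧
    d = Real.log ((dist u b * dist a v) / (dist u a * dist b v)) }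

/-- The hyperbolic (Poincaré) metric of the unit disk, defined by
`sinh (ρ(a,b)/2) = |a-b| / √((1-|a|²)(1-|b|²))`. -/
noncomputable def rhoDist (a b : ℂ) : ℝ :=
  2 * Real.arsinh (‖a - b‖ /
    Real.sqrt ((1 - ‖a‖ ^ 2) * (1 - ‖b‖ ^ 2)))

/-- The visual angle metric of the unit disk:
`v(a,b) = sup {∠(a,z,b) : z ∈ ∂𝔹²}`. -/
noncomputable def visualAngle (a b : ℂ) : ℝ :=
  sSup { α : ℝ | ∃ z : ℂ, ‖z‖ = 1 ∧ α = EuclideanGeometry.angle a z b }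

/-- Euclidean distance from the origin to the line through `a` and `b`. -/
noncomputable def distToLine (a b : ℂ) : ℝ := Metric.infDist 0 (lineThrough a b)

/-- The Hilbert disk `B_h(z₀, t)`. -/
noncomputable def hilbertBall (z₀ : ℂ) (t : ℝ) : Set ℂ :=
  {z : ℂ | ‖z‖ < 1 ∧ hilbertDist z₀ z < t}

/-- The hyperbolic disk `B_ρ(z₀, t)`. -/
noncomputable def rhoBall (z₀ : ℂ) (t : ℝ) : Set ℂ :=
  {z : ℂ | ‖z‖ < 1 ∧ rhoDist z₀ z < t}


open AffineMap RealInnerProductSpace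

lemma exists_eq_mul_sub_mul_sub {α β γ : ℝ} (hα : 0 < α) (hd : 0 ≤ discrim α β γ) :
    ∃ t₁ t₂ : ℝ, t₁ ≤ t₂ ∧ ∀ t, α * t ^ 2 + β * t + γ = α * ((t - t₁) * (t - t₂)) := by
  set s := √(discrim α β γ)
  have hs : s ^ 2 = β ^ 2 - 4 * α * γ := by rw [Real.sq_sqrt hd, discrim, sq]
  refine ⟨(-β - s) / (2 * α), (-β + s) / (2 * α), ?_, fun t => ?_⟩
  · gcongr
    linarith [Real.sqrt_nonneg (discrim α β γ)]
  · have hexpand : α * ((t - (-β - s) / (2 * α)) * (t - (-β + s) / (2 * α))) =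
        α * t ^ 2 + β * t + (β ^ 2 - s ^ 2) / (4 * α) := by
      field_simp
      ring
    rw [hexpand, hs]
    field_simp
    ring

lemma div_eq_add_sqrt_sq_div {X Y : ℝ} (hY : 0 < Y) (hYX : Y ≤ X) :
    X / Y = ((X + Y) / 2 + √(((X + Y) / 2) ^ 2 - X * Y)) ^ 2 / (X * Y) := by
  have hX : 0 < X := hY.trans_le hYX
  have hsqrt : √(((X + Y) / 2) ^ 2 - X * Y) = (X - Y) / 2 := by
    rw [show ((X + Y) / 2) ^ 2 - X * Y = ((X - Y) / 2) ^ 2 by ring]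
    exact Real.sqrt_sq (by linarith)
  rw [hsqrt]
  field_simp
  ring

lemma cross_ratio_eq_of_vieta {α t₁ t₂ p q s : ℝ} (hα : 0 < α) (ht₁ : t₁ < 0) (ht₂ : 1 < t₂)
    (h₀ : p - 1 = α * (t₁ * t₂)) (h₁ : q - 1 = α * ((1 - t₁) * (1 - t₂)))
    (hα' : α = p - 2 * s + q) :
    |1 - t₁| * |t₂| / (|t₁| * |1 - t₂|) =
      (1 - s + √((1 - s) ^ 2 - (1 - p) * (1 - q))) ^ 2 / ((1 - p) * (1 - q)) := by
  have hsum : (α * ((1 - t₁) * t₂) + α * (-t₁ * (t₂ - 1))) / 2 = 1 - s := by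
    linear_combination (1 / 2 : ℝ) * h₁ + (1 / 2 : ℝ) * h₀ + (1 / 2 : ℝ) * hα'
  have hprod : α * ((1 - t₁) * t₂) * (α * (-t₁ * (t₂ - 1))) = (1 - p) * (1 - q) := by
    linear_combination (-(p - 1)) * h₁ - α * ((1 - t₁) * (1 - t₂)) * h₀
  have hY : 0 < α * (-t₁ * (t₂ - 1)) :=
    mul_pos hα (mul_pos (neg_pos.2 ht₁) (sub_pos.2 ht₂))
  have hYX : α * (-t₁ * (t₂ - 1)) ≤ α * ((1 - t₁) * t₂) := by
    nlinarith [mul_nonneg hα.le (by linarith : (0 : ℝ) ≤ t₂ - t₁)]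
  rw [abs_of_pos (by linarith : 0 < 1 - t₁), abs_of_pos (by linarith : 0 < t₂), abs_of_neg ht₁,
    abs_of_neg (by linarith : 1 - t₂ < 0), neg_sub, ← mul_div_mul_left _ _ hα.ne',
    div_eq_add_sqrt_sq_div hY hYX, hsum, hprod]

section NormedSpace

variable {E : Type*} [NormedAddCommGroup E] [NormedSpace ℝ E] {a b : E}

lemma dist_lineMap_left_lt_dist_lineMap_right_iff (hab : a ≠ b) (t : ℝ) :
    dist (lineMap a b t) a < dist (lineMap a b t) b ↔ t < 1 / 2 := by
  rw [dist_lineMap_left, dist_lineMap_right, mul_lt_mul_iff_left₀ (dist_pos.2 hab),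
    Real.norm_eq_abs, Real.norm_eq_abs, ← sq_lt_sq]
  constructor <;> intro h <;> nlinarith

lemma dist_lineMap_cross_ratio (hab : a ≠ b) (s t : ℝ) :
    dist (lineMap a b s) b * dist a (lineMap a b t) /
        (dist (lineMap a b s) a * dist b (lineMap a b t)) =
      |1 - s| * |t| / (|s| * |1 - t|) := by
  have hd : dist a b ≠ 0 := dist_ne_zero.2 hab
  rw [dist_comm b, dist_lineMap_right, dist_left_lineMap, dist_lineMap_left, dist_lineMap_right]
  simp only [Real.norm_eq_abs]
  rw [mul_mul_mul_comm, mul_mul_mul_comm |s|, mul_div_mul_right _ _ (mul_ne_zero hd hd)]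

end NormedSpace

section InnerProductSpace

variable {E : Type*} [NormedAddCommGroup E] [InnerProductSpace ℝ E] {a b : E}

/-- Aczél's inequality. -/
lemma one_sub_norm_sq_mul_le_sq_one_sub_inner (ha : ‖a‖ ≤ 1) (hb : ‖b‖ ≤ 1) :
    (1 - ‖a‖ ^ 2) * (1 - ‖b‖ ^ 2) ≤ (1 - ⟪a, b⟫) ^ 2 := by
  have hinner : ⟪a, b⟫ ≤ ‖a‖ * ‖b‖ := real_inner_le_norm a b
  have hprod : ‖a‖ * ‖b‖ ≤ 1 := mul_le_one₀ ha (norm_nonneg b) hb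
  nlinarith [sq_nonneg (‖a‖ - ‖b‖), norm_nonneg a, norm_nonneg b]

lemma norm_lineMap_sq (a b : E) (t : ℝ) :
    ‖lineMap a b t‖ ^ 2 = ‖b - a‖ ^ 2 * t ^ 2 + 2 * ⟪a, b - a⟫ * t + ‖a‖ ^ 2 := by
  rw [lineMap_apply_module', add_comm, norm_add_sq_real, norm_smul, inner_smul_right,
    Real.norm_eq_abs, mul_pow, sq_abs]
  ring

lemma exists_norm_lineMap_sq_sub_one_eq (ha : ‖a‖ < 1) (hb : ‖b‖ < 1) (hab : a ≠ b) :
    ∃ t₁ t₂ : ℝ, t₁ < 0 ∧ 1 < t₂ ∧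
      ∀ t, ‖lineMap a b t‖ ^ 2 - 1 = ‖b - a‖ ^ 2 * ((t - t₁) * (t - t₂)) := by
  have hα : 0 < ‖b - a‖ ^ 2 := by
    have := norm_pos_iff.2 (sub_ne_zero.2 hab.symm)
    positivity
  have ha' : ‖a‖ ^ 2 - 1 < 0 := by nlinarith [norm_nonneg a]
  have hb' : ‖b‖ ^ 2 - 1 < 0 := by nlinarith [norm_nonneg b]
  obtain ⟨t₁, t₂, hle, hfac⟩ := exists_eq_mul_sub_mul_sub hα
    (β := 2 * ⟪a, b - a⟫) (γ := ‖a‖ ^ 2 - 1) (by rw [discrim]; nlinarith [sq_nonneg ⟪a, b - a⟫])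
  have key : ∀ t, ‖lineMap a b t‖ ^ 2 - 1 = ‖b - a‖ ^ 2 * ((t - t₁) * (t - t₂)) := fun t => by
    rw [norm_lineMap_sq, ← hfac]
    ring
  have h₀ : (0 - t₁) * (0 - t₂) < 0 := by
    have := key 0
    rw [lineMap_apply_zero] at this
    exact neg_of_mul_neg_right (this ▸ ha') hα.le
  have h₁ : (1 - t₁) * (1 - t₂) < 0 := by
    have := key 1
    rw [lineMap_apply_one] at this
    exact neg_of_mul_neg_right (this ▸ hb') hα.le
  refine ⟨t₁, t₂, ?_, ?_, key⟩ <;> nlinarith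

lemma norm_lineMap_eq_one_iff {t₁ t₂ : ℝ} (hab : a ≠ b)
    (hfac : ∀ t, ‖lineMap a b t‖ ^ 2 - 1 = ‖b - a‖ ^ 2 * ((t - t₁) * (t - t₂))) (t : ℝ) :
    ‖lineMap a b t‖ = 1 ↔ t = t₁ ∨ t = t₂ := by
  have hα : ‖b - a‖ ^ 2 ≠ 0 := pow_ne_zero 2 (norm_ne_zero_iff.2 (sub_ne_zero.2 hab.symm))
  rw [← pow_eq_one_iff_of_nonneg (norm_nonneg _) two_ne_zero, ← sub_eq_zero, hfac, mul_eq_zero,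
    mul_eq_zero, sub_eq_zero, sub_eq_zero]
  simp [hα]

lemma cross_ratio_eq_of_factorization {t₁ t₂ : ℝ} (hab : a ≠ b) (ht₁ : t₁ < 0) (ht₂ : 1 < t₂)
    (hfac : ∀ t, ‖lineMap a b t‖ ^ 2 - 1 = ‖b - a‖ ^ 2 * ((t - t₁) * (t - t₂))) :
    |1 - t₁| * |t₂| / (|t₁| * |1 - t₂|) =
      (1 - ⟪a, b⟫ + √((1 - ⟪a, b⟫) ^ 2 - (1 - ‖a‖ ^ 2) * (1 - ‖b‖ ^ 2))) ^ 2 /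
        ((1 - ‖a‖ ^ 2) * (1 - ‖b‖ ^ 2)) := by
  have hα : 0 < ‖b - a‖ ^ 2 := by
    have := norm_pos_iff.2 (sub_ne_zero.2 hab.symm)
    positivity
  have h₀ := hfac 0
  have h₁ := hfac 1
  rw [lineMap_apply_zero, zero_sub, zero_sub, neg_mul_neg] at h₀
  rw [lineMap_apply_one] at h₁
  exact cross_ratio_eq_of_vieta hα ht₁ ht₂ h₀ h₁ (by rw [norm_sub_rev, norm_sub_sq_real])

end InnerProductSpace

lemma lineThrough_eq_range_lineMap (a b : ℂ) :
    lineThrough a b = Set.range (lineMap a b : ℝ → ℂ) := by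
  ext z
  simp only [lineThrough, Set.mem_ofPred_eq, Set.mem_range, lineMap_apply_module', Complex.real_smul]
  exact ⟨fun ⟨t, ht⟩ => ⟨t, by rw [ht, add_comm]⟩, fun ⟨t, ht⟩ => ⟨t, by rw [← ht, add_comm]⟩⟩

lemma hilbertDist_eq_log_of_norm_lineMap_eq_one_iff {a b : ℂ} (hab : a ≠ b) {t₁ t₂ : ℝ}
    (ht₁ : t₁ < 1 / 2) (ht₂ : 1 / 2 < t₂) (hsphere : ∀ t, ‖lineMap a b t‖ = 1 ↔ t = t₁ ∨ t = t₂) :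
    hilbertDist a b = Real.log (|1 - t₁| * |t₂| / (|t₁| * |1 - t₂|)) := by
  have hnear := dist_lineMap_left_lt_dist_lineMap_right_iff hab
  have hfar (t : ℝ) : dist (lineMap a b t) b < dist (lineMap a b t) a ↔ 1 / 2 < t := by
    rw [← lineMap_apply_one_sub, dist_lineMap_left_lt_dist_lineMap_right_iff hab.symm]
    constructor <;> intro h <;> linarith
  rw [hilbertDist, lineThrough_eq_range_lineMap,
    ← csSup_singleton (Real.log (|1 - t₁| * |t₂| / (|t₁| * |1 - t₂|)))]
  congr 1
  ext d
  constructor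
  · rintro ⟨u, v, hu, hv, ⟨s, rfl⟩, ⟨t, rfl⟩, hsu, htv, rfl⟩
    have hs : s = t₁ := ((hsphere s).1 hu).resolve_right fun h => by
      rw [hnear] at hsu
      linarith
    have ht : t = t₂ := ((hsphere t).1 hv).resolve_left fun h => by
      rw [hfar] at htv
      linarith
    rw [hs, ht, dist_lineMap_cross_ratio hab]
    rfl
  · rintro rfl
    exact ⟨_, _, (hsphere t₁).2 (Or.inl rfl), (hsphere t₂).2 (Or.inr rfl), ⟨t₁, rfl⟩, ⟨t₂, rfl⟩,
      (hnear t₁).2 ht₁, (hfar t₂).2 ht₂, by rw [dist_lineMap_cross_ratio hab]⟩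

lemma hilbertDist_eq_log_inner {a b : ℂ} (ha : ‖a‖ < 1) (hb : ‖b‖ < 1) (hab : a ≠ b) :
    hilbertDist a b =
      Real.log ((1 - ⟪a, b⟫ + √((1 - ⟪a, b⟫) ^ 2 - (1 - ‖a‖ ^ 2) * (1 - ‖b‖ ^ 2))) ^ 2 /
        ((1 - ‖a‖ ^ 2) * (1 - ‖b‖ ^ 2))) := by
  obtain ⟨t₁, t₂, ht₁, ht₂, hfac⟩ := exists_norm_lineMap_sq_sub_one_eq ha hb hab
  rw [hilbertDist_eq_log_of_norm_lineMap_eq_one_iff hab (by linarith) (by linarith)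
    (norm_lineMap_eq_one_iff hab hfac), cross_ratio_eq_of_factorization hab ht₁ ht₂ hfac]

lemma Complex.real_inner_eq_re_mul_conj (a b : ℂ) : ⟪a, b⟫ = (a * conj b).re := by
  rw [Complex.inner, ← Complex.conj_re, map_mul, Complex.conj_conj, mul_comm]

lemma Complex.sq_one_sub_re_mul_conj_sub (a b : ℂ) :
    (1 - (a * conj b).re) ^ 2 - (1 - ‖a‖ ^ 2) * (1 - ‖b‖ ^ 2) = ‖a - b‖ ^ 2 - (a * conj b).im ^ 2 := by
  simp only [Complex.sq_norm, Complex.normSq_apply, Complex.mul_re, Complex.mul_im,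
    Complex.conj_re, Complex.conj_im, Complex.sub_re, Complex.sub_im]
  ring

/-- Explicit formula for the Hilbert distance: `h(a,b) = log H` with
`H = (Re((1-a·conj b)²) + |a-b|² + 2 Re(1-a·conj b)·√(|a-b|² - (Im(a·conj b))²))
      / ((1-|a|²)(1-|b|²))`. -/
theorem hilbertDist_eq_log (a b : ℂ)
    (ha : ‖a‖ < 1) (hb : ‖b‖ < 1) (hab : a ≠ b) :
    hilbertDist a b = Real.log (
      (((1 - a * conj b) ^ 2).re + ‖a - b‖ ^ 2 +
        2 * (1 - a * conj b).re *
          Real.sqrt (‖a - b‖ ^ 2 - ((a * conj b).im) ^ 2)) /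
      ((1 - ‖a‖ ^ 2) * (1 - ‖b‖ ^ 2))) := by
  have hinner := Complex.real_inner_eq_re_mul_conj a b
  have hdisc := Complex.sq_one_sub_re_mul_conj_sub a b
  have hnonneg : 0 ≤ ‖a - b‖ ^ 2 - (a * conj b).im ^ 2 :=
    hdisc ▸ sub_nonneg.2 (hinner ▸ one_sub_norm_sq_mul_le_sq_one_sub_inner ha.le hb.le)
  rw [hilbertDist_eq_log_inner ha hb hab, hinner, hdisc, add_sq, Real.sq_sqrt hnonneg]
  congr 2
  simp only [sq, Complex.mul_re, Complex.sub_re, Complex.sub_im, Complex.one_re, Complex.one_im]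
  ring
end

section
/- Let z₀ ∈ (0,1) ⊂ ℝ, t > 0 and r = e^t. Then the Hilbert circle {z = x + iy ∈ 𝔹² : h(z₀, z) = t} is exactly the Euclidean ellipse given by (((r+1)² − (r−1)²z₀²)x − 4rz₀)² / ((r²−1)²(1−z₀²)²) + ((r+1)² − (r−1)²z₀²)y² / ((r−1)²(1−z₀²)) = 1; its semi-minor axis equals (r²−1)(1−z₀²) / ((r+1)² − (r−1)²z₀²) and its semi-major axis equals (r−1)√(1−z₀²) / √((r+1)² − (r−1)²z₀²). -/
/-! The chord through `a ≠ b` is `s ↦ a + s (b - a)`; it meets the unit circle at the roots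
`s₁ < 0 < 1 < s₂` of `‖a + s (b - a)‖² = 1`, and `h(a,b) = log (X / Y)` with
`X = (1 - s₁) s₂`, `Y = -s₁ (s₂ - 1)`. As `0 < Y < X`, the condition `X / Y = r ≥ 1` is
equivalent to the symmetric equation `r (X + Y)² = (1 + r)² X Y`, and Vieta's formulas turn
`‖b - a‖² (X + Y)` into `2 (1 - Re (a b̄))` and `‖b - a‖⁴ X Y` into `(1 - ‖a‖²)(1 - ‖b‖²)`.
Hence the Hilbert circle of radius `log r` about `a` is the conic
`4 r (1 - Re (a b̄))² = (1 + r)² (1 - ‖a‖²)(1 - ‖b‖²)`, and for a real centre completing the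
square in `Re b` gives the ellipse. -/

open Complex ComplexConjugate

lemma div_eq_iff_mul_add_sq_eq {X Y r : ℝ} (hY : 0 < Y) (hYX : Y < X) (hr : 1 ≤ r) :
    X / Y = r ↔ r * (X + Y) ^ 2 = (1 + r) ^ 2 * (X * Y) := by
  rw [div_eq_iff hY.ne']
  constructor
  · rintro rfl
    ring
  · intro h
    have : (r * Y - X) * (r * X - Y) = 0 := by linear_combination -h
    rcases mul_eq_zero.1 this with h | h
    · linarith
    · nlinarith

lemma exists_quadratic_roots_neg_one_lt {α β γ : ℝ} (hα : 0 < α) (h₀ : γ < 0)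
    (h₁ : α + β + γ < 0) :
    ∃ s₁ s₂ : ℝ, s₁ < 0 ∧ 1 < s₂ ∧ α * (s₁ + s₂) = -β ∧ α * (s₁ * s₂) = γ := by
  set δ := Real.sqrt (β ^ 2 - 4 * α * γ)
  have hδ : δ ^ 2 = β ^ 2 - 4 * α * γ := Real.sq_sqrt (by nlinarith)
  have hsum : α * ((-β - δ) / (2 * α) + (-β + δ) / (2 * α)) = -β := by
    field_simp
    ring
  have hprod : α * ((-β - δ) / (2 * α) * ((-β + δ) / (2 * α))) = γ := by
    field_simp
    linear_combination -hδ
  have hle : (-β - δ) / (2 * α) ≤ (-β + δ) / (2 * α) := by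
    gcongr
    linarith [Real.sqrt_nonneg (β ^ 2 - 4 * α * γ)]
  have hneg : (-β - δ) / (2 * α) * ((-β + δ) / (2 * α)) < 0 :=
    neg_of_mul_neg_right (hprod ▸ h₀) hα.le
  have hneg' : (1 - (-β - δ) / (2 * α)) * (1 - (-β + δ) / (2 * α)) < 0 :=
    neg_of_mul_neg_right (a := α) (by linear_combination h₁ - hsum + hprod) hα.le
  refine ⟨_, _, ?_, ?_, hsum, hprod⟩ <;> nlinarith

lemma norm_add_mul_sub_sq (a b : ℂ) (s : ℝ) :
    ‖a + s * (b - a)‖ ^ 2 =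
      ‖b - a‖ ^ 2 * s ^ 2 + 2 * (a * conj (b - a)).re * s + ‖a‖ ^ 2 := by
  simp only [Complex.sq_norm, normSq_apply, add_re, add_im, mul_re, mul_im, sub_re, sub_im,
    conj_re, conj_im, ofReal_re, ofReal_im]
  ring

lemma exists_chord_params {a b : ℂ} (ha : ‖a‖ < 1) (hb : ‖b‖ < 1) (hab : a ≠ b) :
    ∃ s₁ s₂ : ℝ, s₁ < 0 ∧ 1 < s₂ ∧
      ∀ s : ℝ, ‖a + s * (b - a)‖ ^ 2 - 1 = ‖b - a‖ ^ 2 * ((s - s₁) * (s - s₂)) := by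
  have hnorm_b := norm_add_mul_sub_sq a b 1
  push_cast at hnorm_b
  rw [one_mul, add_sub_cancel] at hnorm_b
  obtain ⟨s₁, s₂, hs₁, hs₂, hsum, hprod⟩ := exists_quadratic_roots_neg_one_lt
    (pow_pos (norm_pos_iff.2 (sub_ne_zero.2 hab.symm)) 2)
    (by nlinarith [norm_nonneg a] : ‖a‖ ^ 2 - 1 < 0)
    (by nlinarith [norm_nonneg b] : ‖b - a‖ ^ 2 + 2 * (a * conj (b - a)).re + (‖a‖ ^ 2 - 1) < 0)
  refine ⟨s₁, s₂, hs₁, hs₂, fun s => ?_⟩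
  rw [norm_add_mul_sub_sq]
  linear_combination s * hsum - hprod

lemma dist_add_mul_sub_left (a b : ℂ) (s : ℝ) : dist (a + s * (b - a)) a = |s| * ‖b - a‖ := by
  rw [dist_eq_norm, add_sub_cancel_left, norm_mul, norm_real, Real.norm_eq_abs]

lemma dist_add_mul_sub_right (a b : ℂ) (s : ℝ) :
    dist (a + s * (b - a)) b = |s - 1| * ‖b - a‖ := by
  rw [dist_eq_norm, show a + s * (b - a) - b = ((s - 1 : ℝ) : ℂ) * (b - a) by push_cast; ring,
    norm_mul, norm_real, Real.norm_eq_abs]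

lemma hilbertDist_eq_log_of_chord {a b : ℂ} {s₁ s₂ : ℝ} (hab : a ≠ b) (hs₁ : s₁ < 0)
    (hs₂ : 1 < s₂)
    (hfactor : ∀ s : ℝ, ‖a + s * (b - a)‖ ^ 2 - 1 = ‖b - a‖ ^ 2 * ((s - s₁) * (s - s₂))) :
    hilbertDist a b = Real.log ((1 - s₁) * s₂ / (-s₁ * (s₂ - 1))) := by
  have hW : 0 < ‖b - a‖ := norm_pos_iff.2 (sub_ne_zero.2 hab.symm)
  have hchord (s : ℝ) : ‖a + s * (b - a)‖ = 1 ↔ s = s₁ ∨ s = s₂ := by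
    rw [← pow_eq_one_iff_of_nonneg (norm_nonneg _) two_ne_zero, ← sub_eq_zero, hfactor,
      mul_eq_zero, or_iff_right (pow_pos hW 2).ne', mul_eq_zero, sub_eq_zero, sub_eq_zero]
  have hratio : dist (a + s₁ * (b - a)) b * dist a (a + s₂ * (b - a)) /
      (dist (a + s₁ * (b - a)) a * dist b (a + s₂ * (b - a))) =
        (1 - s₁) * s₂ / (-s₁ * (s₂ - 1)) := by
    rw [dist_comm a, dist_comm b, dist_add_mul_sub_left, dist_add_mul_sub_left,
      dist_add_mul_sub_right, dist_add_mul_sub_right, abs_of_neg hs₁,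
      abs_of_neg (by linarith : s₁ - 1 < 0), abs_of_pos (by linarith : 0 < s₂),
      abs_of_pos (by linarith : 0 < s₂ - 1)]
    field_simp
    ring
  suffices h : { d : ℝ | ∃ u v : ℂ, ‖u‖ = 1 ∧ ‖v‖ = 1 ∧
      u ∈ lineThrough a b ∧ v ∈ lineThrough a b ∧
      dist u a < dist u b ∧ dist v b < dist v a ∧
      d = Real.log ((dist u b * dist a v) / (dist u a * dist b v)) } =
        {Real.log ((1 - s₁) * s₂ / (-s₁ * (s₂ - 1)))} by
    rw [hilbertDist, h, csSup_singleton]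
  ext d
  simp only [Set.mem_ofPred_eq, Set.mem_singleton_iff]
  constructor
  · rintro ⟨_, _, hu, hv, ⟨su, rfl⟩, ⟨sv, rfl⟩, hnear_u, hnear_v, rfl⟩
    rw [dist_add_mul_sub_left, dist_add_mul_sub_right, mul_lt_mul_iff_of_pos_right hW,
      ← sq_lt_sq] at hnear_u hnear_v
    obtain rfl : su = s₁ := ((hchord su).1 hu).resolve_right (by rintro rfl; nlinarith)
    obtain rfl : sv = s₂ := ((hchord sv).1 hv).resolve_left (by rintro rfl; nlinarith)
    exact congrArg Real.log hratio
  · rintro rfl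
    refine ⟨_, _, (hchord s₁).2 (.inl rfl), (hchord s₂).2 (.inr rfl), ⟨s₁, rfl⟩, ⟨s₂, rfl⟩,
      ?_, ?_, by rw [hratio]⟩ <;>
    rw [dist_add_mul_sub_left, dist_add_mul_sub_right, mul_lt_mul_iff_of_pos_right hW,
      ← sq_lt_sq] <;> nlinarith

lemma hilbertDist_self (a : ℂ) : hilbertDist a a = 0 := by
  simp [hilbertDist]

lemma hilbertDist_eq_log_iff {a b : ℂ} {r : ℝ} (ha : ‖a‖ < 1) (hb : ‖b‖ < 1) (hr : 1 < r) :
    hilbertDist a b = Real.log r ↔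
      4 * r * (1 - (a * conj b).re) ^ 2 = (1 + r) ^ 2 * ((1 - ‖a‖ ^ 2) * (1 - ‖b‖ ^ 2)) := by
  rcases eq_or_ne a b with rfl | hab
  · rw [hilbertDist_self, mul_conj, ofReal_re, ← Complex.sq_norm]
    refine iff_of_false (Real.log_pos hr).ne fun h => ?_
    have : 0 < (r - 1) ^ 2 * (1 - ‖a‖ ^ 2) ^ 2 := by
      have : 0 < 1 - ‖a‖ ^ 2 := by nlinarith [norm_nonneg a]
      have : 0 < r - 1 := by linarith
      positivity
    linarith
  obtain ⟨s₁, s₂, hs₁, hs₂, hfactor⟩ := exists_chord_params ha hb hab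
  rw [hilbertDist_eq_log_of_chord hab hs₁ hs₂ hfactor]
  have hY : 0 < -s₁ * (s₂ - 1) := by nlinarith
  have hYX : -s₁ * (s₂ - 1) < (1 - s₁) * s₂ := by nlinarith
  rw [Real.log_injOn_pos.eq_iff (div_pos (hY.trans hYX) hY) (zero_lt_one.trans hr),
    div_eq_iff_mul_add_sq_eq hY hYX hr.le]
  have h₀ := hfactor 0
  have h₁ := hfactor 1
  push_cast at h₀ h₁
  rw [zero_mul, add_zero] at h₀
  rw [one_mul, add_sub_cancel] at h₁
  have hab' : ‖b - a‖ ^ 2 = ‖a‖ ^ 2 + ‖b‖ ^ 2 - 2 * (a * conj b).re := by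
    rw [norm_sub_rev, Complex.sq_norm, Complex.sq_norm, Complex.sq_norm, normSq_sub]
  set α := ‖b - a‖ ^ 2
  set X := (1 - s₁) * s₂
  set Y := -s₁ * (s₂ - 1)
  have hsum : α * (X + Y) = 2 * (1 - (a * conj b).re) := by
    linear_combination hab' + h₀ + h₁
  have hprod : α * X * (α * Y) = (1 - ‖a‖ ^ 2) * (1 - ‖b‖ ^ 2) := by
    linear_combination (-(α * ((1 - s₁) * (1 - s₂)))) * h₀ - (‖a‖ ^ 2 - 1) * h₁
  rw [← mul_right_inj' (pow_ne_zero 2 (pow_pos (norm_pos_iff.2 (sub_ne_zero.2 hab.symm)) 2).ne'),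
    show α ^ 2 * (r * (X + Y) ^ 2) = 4 * r * (1 - (a * conj b).re) ^ 2 by
      linear_combination r * (α * (X + Y) + 2 * (1 - (a * conj b).re)) * hsum,
    show α ^ 2 * ((1 + r) ^ 2 * (X * Y)) = (1 + r) ^ 2 * ((1 - ‖a‖ ^ 2) * (1 - ‖b‖ ^ 2)) by
      linear_combination (1 + r) ^ 2 * hprod]

lemma norm_lt_one_of_circle_equation {a b : ℂ} {r : ℝ} (ha : ‖a‖ < 1) (hr : 0 < r)
    (h : 4 * r * (1 - (a * conj b).re) ^ 2 = (1 + r) ^ 2 * ((1 - ‖a‖ ^ 2) * (1 - ‖b‖ ^ 2))) :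
    ‖b‖ < 1 := by
  by_contra! hb
  have ha' : 0 < 1 - ‖a‖ ^ 2 := by nlinarith [norm_nonneg a]
  have hre : (a * conj b).re ≤ ‖a‖ * ‖b‖ := by
    simpa only [norm_mul, norm_conj] using re_le_norm (a * conj b)
  have hc : 0 < (1 + r) ^ 2 * (1 - ‖a‖ ^ 2) := by positivity
  have hb1 : ‖b‖ ^ 2 = 1 := by nlinarith [sq_nonneg (1 - (a * conj b).re)]
  have hre1 : (a * conj b).re = 1 := by
    have : (1 - (a * conj b).re) ^ 2 = 0 := by nlinarith
    linarith [pow_eq_zero_iff two_ne_zero |>.1 this]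
  have : ‖b‖ = 1 := by nlinarith
  nlinarith

theorem setOf_hilbertDist_eq_log {a : ℂ} {r : ℝ} (ha : ‖a‖ < 1) (hr : 1 < r) :
    {b : ℂ | ‖b‖ < 1 ∧ hilbertDist a b = Real.log r} =
      {b : ℂ | 4 * r * (1 - (a * conj b).re) ^ 2 =
        (1 + r) ^ 2 * ((1 - ‖a‖ ^ 2) * (1 - ‖b‖ ^ 2))} := by
  ext b
  refine ⟨fun ⟨hb, h⟩ => (hilbertDist_eq_log_iff ha hb hr).1 h, fun h => ?_⟩
  have hb := norm_lt_one_of_circle_equation ha (zero_lt_one.trans hr) h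
  exact ⟨hb, (hilbertDist_eq_log_iff ha hb hr).2 h⟩

lemma mul_sqrt_div_sqrt_sq (c : ℝ) {u v : ℝ} (hu : 0 ≤ u) (hv : 0 ≤ v) :
    (c * Real.sqrt u / Real.sqrt v) ^ 2 = c ^ 2 * u / v := by
  rw [div_pow, mul_pow, Real.sq_sqrt hu, Real.sq_sqrt hv]

lemma ellipse_coeff_pos {r z₀ : ℝ} (hr : 0 < r) (hz₀ : z₀ ^ 2 < 1) :
    0 < (r + 1) ^ 2 - (r - 1) ^ 2 * z₀ ^ 2 := by
  nlinarith [sq_nonneg (r - 1)]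

lemma circle_equation_iff_ellipse_equation {r z₀ x y : ℝ} (hr : 1 < r) (hz₀ : z₀ ^ 2 < 1) :
    4 * r * (1 - z₀ * x) ^ 2 = (1 + r) ^ 2 * ((1 - z₀ ^ 2) * (1 - (x ^ 2 + y ^ 2))) ↔
      (((r + 1) ^ 2 - (r - 1) ^ 2 * z₀ ^ 2) * x - 4 * r * z₀) ^ 2 /
          ((r ^ 2 - 1) ^ 2 * (1 - z₀ ^ 2) ^ 2) +
        ((r + 1) ^ 2 - (r - 1) ^ 2 * z₀ ^ 2) * y ^ 2 / ((r - 1) ^ 2 * (1 - z₀ ^ 2)) = 1 := by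
  have hK := ellipse_coeff_pos (zero_lt_one.trans hr) hz₀
  have hr'' : 0 < r ^ 2 - 1 := by nlinarith
  have hc : (r - 1) ^ 2 * (1 - z₀ ^ 2) * ((r + 1) ^ 2 - (r - 1) ^ 2 * z₀ ^ 2) ≠ 0 := by positivity
  rw [div_add_div _ _ (by positivity) (by positivity), div_eq_one_iff_eq (by positivity)]
  constructor <;> intro h
  · linear_combination (r - 1) ^ 2 * (1 - z₀ ^ 2) * ((r + 1) ^ 2 - (r - 1) ^ 2 * z₀ ^ 2) * h
  · apply mul_left_cancel₀ hc
    linear_combination h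

lemma ellipse_standard_form {r z₀ : ℝ} (hr : 1 < r) (hz₀ : z₀ ^ 2 < 1) (x y : ℝ) :
    ((x - 4 * r * z₀ / ((r + 1) ^ 2 - (r - 1) ^ 2 * z₀ ^ 2)) /
        ((r ^ 2 - 1) * (1 - z₀ ^ 2) / ((r + 1) ^ 2 - (r - 1) ^ 2 * z₀ ^ 2))) ^ 2 +
      (y / ((r - 1) * Real.sqrt (1 - z₀ ^ 2) /
        Real.sqrt ((r + 1) ^ 2 - (r - 1) ^ 2 * z₀ ^ 2))) ^ 2 =
    (((r + 1) ^ 2 - (r - 1) ^ 2 * z₀ ^ 2) * x - 4 * r * z₀) ^ 2 /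
        ((r ^ 2 - 1) ^ 2 * (1 - z₀ ^ 2) ^ 2) +
      ((r + 1) ^ 2 - (r - 1) ^ 2 * z₀ ^ 2) * y ^ 2 / ((r - 1) ^ 2 * (1 - z₀ ^ 2)) := by
  have hz : 0 < 1 - z₀ ^ 2 := by linarith
  have hK := ellipse_coeff_pos (zero_lt_one.trans hr) hz₀
  rw [div_pow y, mul_sqrt_div_sqrt_sq _ hz.le hK.le, sub_div' hK.ne']
  field_simp

lemma semiMinor_le_semiMajor {r z₀ : ℝ} (hr : 1 < r) (hz₀ : z₀ ^ 2 < 1) :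
    (r ^ 2 - 1) * (1 - z₀ ^ 2) / ((r + 1) ^ 2 - (r - 1) ^ 2 * z₀ ^ 2) ≤
      (r - 1) * Real.sqrt (1 - z₀ ^ 2) / Real.sqrt ((r + 1) ^ 2 - (r - 1) ^ 2 * z₀ ^ 2) := by
  have hz : 0 < 1 - z₀ ^ 2 := by linarith
  have hK := ellipse_coeff_pos (zero_lt_one.trans hr) hz₀
  have hr'' : 0 < r ^ 2 - 1 := by nlinarith
  rw [← pow_le_pow_iff_left₀ (by positivity) (by positivity) two_ne_zero,
    mul_sqrt_div_sqrt_sq _ hz.le hK.le, div_pow, div_le_div_iff₀ (by positivity) hK]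
  have : 0 ≤ (r - 1) ^ 2 * (1 - z₀ ^ 2) * (4 * r * z₀ ^ 2) := by positivity
  nlinarith

/-- For a real center `z₀ ∈ (0,1)`, the Hilbert circle `∂B_h(z₀,t)` is exactly
the Euclidean ellipse
`(((r+1)²-(r-1)²z₀²)x - 4rz₀)²/((r²-1)²(1-z₀²)²) + ((r+1)²-(r-1)²z₀²)y²/((r-1)²(1-z₀²)) = 1`
(with `r = eᵗ`, `z = x+iy`); its semi-minor axis is `(r²-1)(1-z₀²)/((r+1)²-(r-1)²z₀²)`
and its semi-major axis is `(r-1)√(1-z₀²)/√((r+1)²-(r-1)²z₀²)`. -/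
theorem hilbert_circle_ellipse_real_center (z₀ : ℝ) (h₁ : 0 < z₀) (h₂ : z₀ < 1)
    (t : ℝ) (ht : 0 < t) (r : ℝ) (hr : r = Real.exp t) :
    ({z : ℂ | ‖z‖ < 1 ∧ hilbertDist (z₀ : ℂ) z = t} =
      {z : ℂ |
        (((r + 1) ^ 2 - (r - 1) ^ 2 * z₀ ^ 2) * z.re - 4 * r * z₀) ^ 2 /
            ((r ^ 2 - 1) ^ 2 * (1 - z₀ ^ 2) ^ 2) +
          ((r + 1) ^ 2 - (r - 1) ^ 2 * z₀ ^ 2) * z.im ^ 2 /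
            ((r - 1) ^ 2 * (1 - z₀ ^ 2)) = 1}) ∧
    ({z : ℂ | ‖z‖ < 1 ∧ hilbertDist (z₀ : ℂ) z = t} =
      {z : ℂ |
        ((z.re - 4 * r * z₀ / ((r + 1) ^ 2 - (r - 1) ^ 2 * z₀ ^ 2)) /
            ((r ^ 2 - 1) * (1 - z₀ ^ 2) / ((r + 1) ^ 2 - (r - 1) ^ 2 * z₀ ^ 2))) ^ 2 +
          (z.im /
            ((r - 1) * Real.sqrt (1 - z₀ ^ 2) /
              Real.sqrt ((r + 1) ^ 2 - (r - 1) ^ 2 * z₀ ^ 2))) ^ 2 = 1}) ∧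
    (r ^ 2 - 1) * (1 - z₀ ^ 2) / ((r + 1) ^ 2 - (r - 1) ^ 2 * z₀ ^ 2) ≤
      (r - 1) * Real.sqrt (1 - z₀ ^ 2) / Real.sqrt ((r + 1) ^ 2 - (r - 1) ^ 2 * z₀ ^ 2) := by
  have hr1 : 1 < r := hr ▸ Real.one_lt_exp_iff.2 ht
  have hz₀ : z₀ ^ 2 < 1 := by nlinarith
  have hcenter : ‖(z₀ : ℂ)‖ < 1 := by rwa [norm_real, Real.norm_of_nonneg h₁.le]
  have hellipse : {z : ℂ | ‖z‖ < 1 ∧ hilbertDist (z₀ : ℂ) z = t} =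
      {z : ℂ | (((r + 1) ^ 2 - (r - 1) ^ 2 * z₀ ^ 2) * z.re - 4 * r * z₀) ^ 2 /
            ((r ^ 2 - 1) ^ 2 * (1 - z₀ ^ 2) ^ 2) +
          ((r + 1) ^ 2 - (r - 1) ^ 2 * z₀ ^ 2) * z.im ^ 2 /
            ((r - 1) ^ 2 * (1 - z₀ ^ 2)) = 1} := by
    rw [show t = Real.log r by rw [hr, Real.log_exp], setOf_hilbertDist_eq_log hcenter hr1]
    ext z
    rw [Set.mem_ofPred_eq, Set.mem_ofPred_eq, ← circle_equation_iff_ellipse_equation hr1 hz₀]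
    simp only [norm_real, Real.norm_eq_abs, sq_abs, Complex.sq_norm, normSq_apply, mul_re,
      conj_re, conj_im, ofReal_re, ofReal_im]
    ring_nf
  refine ⟨hellipse, hellipse.trans ?_, semiMinor_le_semiMajor hr1 hz₀⟩
  ext z
  rw [Set.mem_ofPred_eq, Set.mem_ofPred_eq, ellipse_standard_form hr1 hz₀]
end

section
/- Let 0 < z₀ < 1 and t > 0. Then the largest number s > 0 such that the hyperbolic disk B_ρ(z₀, s) is contained in the Hilbert disk B_h(z₀, t) is s = t; that is, B_ρ(z₀, t) ⊆ B_h(z₀, t), and for every s > t the inclusion B_ρ(z₀, s) ⊆ B_h(z₀, t) fails. -/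
open Complex ComplexConjugate

/-!
Parametrize the chord through `a` and `b` as `s ↦ a + s (b - a)`, meeting the unit sphere at
`s = p < 0` and `s = q > 1`. Then `‖a + s (b - a)‖² - 1 = ‖b - a‖² (s - p)(s - q)`, which at
`s = 0, 1` expresses `1 - ‖a‖²` and `1 - ‖b‖²` through `p, q`. Substituting, the Hilbert
distance along this chord becomes `2 arsinh (‖u - v‖/2 · sinh (ρ/2))`, where `‖u - v‖ ≤ 2` is the
chord length; so `h ≤ ρ`, with equality along a diameter. On the real diameter both distances
equal `2 (artanh b - artanh a)`, so the point `tanh (artanh z₀ + t/2)` lies in every `B_ρ(z₀, s)`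
with `s > t` but not in `B_h(z₀, t)`.
-/

theorem Real.log_div_eq_two_mul_arsinh {P Q : ℝ} (hP : 0 < P) (hQ : 0 < Q) :
    log (P / Q) = 2 * arsinh ((P - Q) / (2 * √(P * Q))) := by
  have hr : 0 < √(P * Q) := sqrt_pos.mpr (mul_pos hP hQ)
  have hr2 : √(P * Q) ^ 2 = P * Q := sq_sqrt (mul_pos hP hQ).le
  have hcosh : √(1 + ((P - Q) / (2 * √(P * Q))) ^ 2) = (P + Q) / (2 * √(P * Q)) := by
    rw [show 1 + ((P - Q) / (2 * √(P * Q))) ^ 2 = ((P + Q) / (2 * √(P * Q))) ^ 2 by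
      field_simp; linear_combination 4 * hr2, sqrt_sq (by positivity)]
  rw [arsinh, hcosh, ← add_div, show P - Q + (P + Q) = 2 * P by ring,
    mul_div_mul_left _ _ two_ne_zero, ← Nat.cast_ofNat, ← log_pow]
  congr 1
  field_simp
  rw [hr2]

theorem dist_add_smul_add_smul {E : Type*} [SeminormedAddCommGroup E] [NormedSpace ℝ E]
    (a w : E) (p q : ℝ) : dist (a + p • w) (a + q • w) = |p - q| * ‖w‖ := by
  rw [dist_add_left, dist_eq_norm, ← sub_smul, norm_smul, Real.norm_eq_abs]

section Chord

variable {E : Type*} [NormedAddCommGroup E] [InnerProductSpace ℝ E]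

theorem norm_add_smul_sq_sub_one_eq {a w : E} {p q : ℝ} (hpq : p ≠ q)
    (hp : ‖a + p • w‖ = 1) (hq : ‖a + q • w‖ = 1) (s : ℝ) :
    ‖a + s • w‖ ^ 2 - 1 = ‖w‖ ^ 2 * ((s - p) * (s - q)) := by
  have expand (x : ℝ) :
      ‖a + x • w‖ ^ 2 = ‖a‖ ^ 2 + 2 * x * inner ℝ a w + x ^ 2 * ‖w‖ ^ 2 := by
    rw [norm_add_sq_real, inner_smul_right, norm_smul, mul_pow, Real.norm_eq_abs, sq_abs]
    ring
  have ep := expand p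
  have eq := expand q
  rw [hp] at ep
  rw [hq] at eq
  have vieta : 2 * inner ℝ a w + (p + q) * ‖w‖ ^ 2 = 0 := by
    have : (p - q) * (2 * inner ℝ a w + (p + q) * ‖w‖ ^ 2) = 0 := by
      linear_combination eq - ep
    exact (mul_eq_zero.mp this).resolve_left (sub_ne_zero.mpr hpq)
  rw [expand]
  linear_combination -ep + (s - p) * vieta

theorem log_crossRatio_eq_two_mul_arsinh {a b u v : E} {p q : ℝ}
    (hu : ‖u‖ = 1) (hv : ‖v‖ = 1) (hup : u = a + p • (b - a)) (hvq : v = a + q • (b - a))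
    (hua : dist u a < dist u b) (hvb : dist v b < dist v a) (ha : ‖a‖ < 1) (hb : ‖b‖ < 1) :
    Real.log ((dist u b * dist a v) / (dist u a * dist b v)) =
      2 * Real.arsinh (dist u v * (‖a - b‖ / √((1 - ‖a‖ ^ 2) * (1 - ‖b‖ ^ 2))) / 2) := by
  subst hup hvq
  set w := b - a
  have hd := dist_add_smul_add_smul a w
  have ha' : a + (0 : ℝ) • w = a := by simp
  have hb' : a + (1 : ℝ) • w = b := by simp [w]
  have dua : dist (a + p • w) a = |p| * ‖w‖ := by simpa [ha'] using hd p 0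
  have dub : dist (a + p • w) b = |p - 1| * ‖w‖ := by rw [← hb', hd]
  have dav : dist a (a + q • w) = |q| * ‖w‖ := by simpa [abs_sub_comm] using hd 0 q
  have dbv : dist b (a + q • w) = |q - 1| * ‖w‖ := by rw [← hb', hd, abs_sub_comm]
  have duv : dist (a + p • w) (a + q • w) = |q - p| * ‖w‖ := by rw [hd, abs_sub_comm]
  have hw : 0 < ‖w‖ :=
    norm_pos_iff.mpr fun hw0 => (by simpa [hw0] using hua : a ≠ b) (sub_eq_zero.mp hw0).symm
  have hp : p < 1 / 2 := by
    rw [dua, dub, mul_lt_mul_iff_of_pos_right hw, ← sq_lt_sq] at hua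
    linarith
  have hq : 1 / 2 < q := by
    rw [dist_comm, dbv, dist_comm, dav, mul_lt_mul_iff_of_pos_right hw, ← sq_lt_sq] at hvb
    linarith
  have chord := norm_add_smul_sq_sub_one_eq (by linarith : p ≠ q) hu hv
  have hna : 1 - ‖a‖ ^ 2 = ‖w‖ ^ 2 * (-p * q) := by
    have c0 := chord 0
    rw [ha'] at c0
    linear_combination -c0
  have hnb : 1 - ‖b‖ ^ 2 = ‖w‖ ^ 2 * ((1 - p) * (q - 1)) := by
    have c1 := chord 1
    rw [hb'] at c1
    linear_combination -c1
  have hsigns : p < 0 ∧ 1 < q := by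
    have h0 : 0 < -p * q := pos_of_mul_pos_right
      (hna ▸ sub_pos.mpr (pow_lt_one₀ (norm_nonneg a) ha two_ne_zero)) (by positivity)
    have h1 : 0 < (1 - p) * (q - 1) := pos_of_mul_pos_right
      (hnb ▸ sub_pos.mpr (pow_lt_one₀ (norm_nonneg b) hb two_ne_zero)) (by positivity)
    constructor <;> nlinarith
  obtain ⟨hp0, hq1⟩ := hsigns
  have hP : 0 < (1 - p) * q := by nlinarith
  have hQ : 0 < -p * (q - 1) := by nlinarith
  rw [dub, dav, dua, dbv, duv, hna, hnb, show ‖a - b‖ = ‖w‖ from norm_sub_rev a b,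
    abs_of_neg (by linarith : p - 1 < 0), abs_of_pos (by linarith : 0 < q), abs_of_neg hp0,
    abs_of_pos (by linarith : 0 < q - 1), abs_of_pos (by linarith : 0 < q - p)]
  rw [show -(p - 1) * ‖w‖ * (q * ‖w‖) / (-p * ‖w‖ * ((q - 1) * ‖w‖)) =
      (1 - p) * q / (-p * (q - 1)) by field_simp; ring, Real.log_div_eq_two_mul_arsinh hP hQ]
  rw [show ‖w‖ ^ 2 * (-p * q) * (‖w‖ ^ 2 * ((1 - p) * (q - 1))) =
      (‖w‖ ^ 2) ^ 2 * ((1 - p) * q * (-p * (q - 1))) by ring,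
    Real.sqrt_mul (by positivity : (0 : ℝ) ≤ (‖w‖ ^ 2) ^ 2), Real.sqrt_sq (by positivity)]
  congr 2
  field_simp
  ring

end Chord

def logCrossRatios (a b : ℂ) : Set ℝ :=
  { d : ℝ | ∃ u v : ℂ, ‖u‖ = 1 ∧ ‖v‖ = 1 ∧
    u ∈ lineThrough a b ∧ v ∈ lineThrough a b ∧
    dist u a < dist u b ∧ dist v b < dist v a ∧
    d = Real.log ((dist u b * dist a v) / (dist u a * dist b v)) }

theorem hilbertDist_eq_sSup (a b : ℂ) : hilbertDist a b = sSup (logCrossRatios a b) := rfl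

theorem rhoDist_nonneg (a b : ℂ) : 0 ≤ rhoDist a b := by
  unfold rhoDist
  exact mul_nonneg zero_le_two (Real.arsinh_nonneg_iff.mpr (by positivity))

theorem le_rhoDist_of_mem_logCrossRatios {a b : ℂ} (ha : ‖a‖ < 1) (hb : ‖b‖ < 1) {d : ℝ}
    (hd : d ∈ logCrossRatios a b) : d ≤ rhoDist a b := by
  obtain ⟨u, v, hu, hv, ⟨p, hup⟩, ⟨q, hvq⟩, hua, hvb, rfl⟩ := hd
  rw [log_crossRatio_eq_two_mul_arsinh hu hv (by rwa [Complex.real_smul])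
    (by rwa [Complex.real_smul]) hua hvb ha hb, rhoDist]
  have huv : dist u v ≤ 2 := (dist_le_norm_add_norm u v).trans_eq (by rw [hu, hv]; norm_num)
  gcongr 2 * Real.arsinh ?_
  have hX : 0 ≤ ‖a - b‖ / √((1 - ‖a‖ ^ 2) * (1 - ‖b‖ ^ 2)) := by positivity
  linarith [mul_le_mul_of_nonneg_right huv hX]

theorem hilbertDist_le_rhoDist {a b : ℂ} (ha : ‖a‖ < 1) (hb : ‖b‖ < 1) :
    hilbertDist a b ≤ rhoDist a b := by
  rw [hilbertDist_eq_sSup]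
  exact Real.sSup_le (fun _ => le_rhoDist_of_mem_logCrossRatios ha hb) (rhoDist_nonneg a b)

theorem norm_ofReal_lt_one {x : ℝ} (h₁ : -1 < x) (h₂ : x < 1) : ‖(x : ℂ)‖ < 1 := by
  rw [Complex.norm_real, Real.norm_eq_abs, abs_lt]
  exact ⟨h₁, h₂⟩

theorem ofReal_mem_lineThrough {a b : ℝ} (hab : a ≠ b) (x : ℝ) : (x : ℂ) ∈ lineThrough a b :=
  ⟨(x - a) / (b - a), by
    have : (b : ℂ) - a ≠ 0 := by exact_mod_cast sub_ne_zero.mpr hab.symm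
    push_cast
    field_simp
    ring⟩

theorem rhoDist_ofReal {a b : ℝ} (ha : -1 < a) (hab : a ≤ b) (hb : b < 1) :
    rhoDist a b = 2 * (Real.artanh b - Real.artanh a) := by
  have ha' : a ∈ Set.Ioo (-1) 1 := ⟨ha, by linarith⟩
  have hb' : b ∈ Set.Ioo (-1) 1 := ⟨by linarith, hb⟩
  have ha2 : 0 < 1 - a ^ 2 := by nlinarith
  have hb2 : 0 < 1 - b ^ 2 := by nlinarith
  rw [rhoDist, ← Real.arsinh_sinh (Real.artanh b - Real.artanh a), Real.sinh_sub,
    Real.sinh_artanh hb', Real.cosh_artanh ha', Real.cosh_artanh hb', Real.sinh_artanh ha',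
    ← Complex.ofReal_sub, Complex.norm_real, Complex.norm_real, Complex.norm_real,
    Real.norm_eq_abs, Real.norm_eq_abs, Real.norm_eq_abs, sq_abs, sq_abs, abs_sub_comm,
    abs_of_nonneg (sub_nonneg.mpr hab), Real.sqrt_mul ha2.le]
  field_simp

theorem two_mul_artanh_sub_mem_logCrossRatios {a b : ℝ} (ha : -1 < a) (hab : a < b)
    (hb : b < 1) :
    2 * (Real.artanh b - Real.artanh a) ∈ logCrossRatios a b := by
  have hd : ∀ x y : ℝ, x < y → dist (x : ℂ) y = y - x := fun x y h => by
    rw [Complex.dist_eq, ← Complex.ofReal_sub, Complex.norm_real, Real.norm_eq_abs,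
      abs_of_neg (sub_neg.mpr h), neg_sub]
  have dua : dist (-1 : ℂ) a = 1 + a := by simpa [add_comm] using hd (-1) a ha
  have dub : dist (-1 : ℂ) b = 1 + b := by simpa [add_comm] using hd (-1) b (by linarith)
  have dav : dist (a : ℂ) 1 = 1 - a := by simpa using hd a 1 (by linarith)
  have dbv : dist (b : ℂ) 1 = 1 - b := by simpa using hd b 1 hb
  refine ⟨-1, 1, by simp, by simp, by exact_mod_cast ofReal_mem_lineThrough hab.ne (-1),
    by exact_mod_cast ofReal_mem_lineThrough hab.ne 1, ?_, ?_, ?_⟩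
  · rw [dua, dub]
    linarith
  · rw [dist_comm, dbv, dist_comm, dav]
    linarith
  · rw [dua, dub, dav, dbv, Real.artanh_eq_half_log ⟨by linarith, by linarith⟩,
      Real.artanh_eq_half_log ⟨by linarith, by linarith⟩, ← mul_sub, ← mul_assoc,
      mul_one_div_cancel two_ne_zero, one_mul, ← Real.log_div
      (div_pos (by linarith) (by linarith)).ne' (div_pos (by linarith) (by linarith)).ne']
    congr 1
    field_simp

theorem hilbertDist_ofReal_eq_rhoDist {a b : ℝ} (ha : -1 < a) (hab : a < b) (hb : b < 1) :
    hilbertDist a b = rhoDist a b := by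
  have ha' := norm_ofReal_lt_one ha (hab.trans hb)
  have hb' := norm_ofReal_lt_one (ha.trans hab) hb
  refine le_antisymm (hilbertDist_le_rhoDist ha' hb') ?_
  rw [rhoDist_ofReal ha hab.le hb, hilbertDist_eq_sSup]
  exact le_csSup ⟨rhoDist a b, fun _ => le_rhoDist_of_mem_logCrossRatios ha' hb'⟩
    (two_mul_artanh_sub_mem_logCrossRatios ha hab hb)

/-- For `0 < z₀ < 1` and `t > 0`, the largest `s` with `B_ρ(z₀,s) ⊆ B_h(z₀,t)`
is `s = t`: the inclusion holds for `s = t` and fails for every `s > t`. -/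
theorem rho_ball_subset_hilbert_ball (z₀ : ℝ) (h₁ : 0 < z₀) (h₂ : z₀ < 1)
    (t : ℝ) (ht : 0 < t) :
    rhoBall (z₀ : ℂ) t ⊆ hilbertBall (z₀ : ℂ) t ∧
    ∀ s : ℝ, t < s → ¬ (rhoBall (z₀ : ℂ) s ⊆ hilbertBall (z₀ : ℂ) t) := by
  have hz₀ : -1 < z₀ := by linarith
  refine ⟨fun z hz => ⟨hz.1, (hilbertDist_le_rhoDist (norm_ofReal_lt_one hz₀ h₂) hz.1).trans_lt
    hz.2⟩, fun s hts hsub => ?_⟩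
  -- the point of the real diameter at hyperbolic distance `t` from `z₀`
  set z := Real.tanh (Real.artanh z₀ + t / 2)
  have hz : z₀ < z := by
    rw [← Real.artanh_lt_artanh_iff ⟨hz₀, h₂⟩ ⟨Real.neg_one_lt_tanh _, Real.tanh_lt_one _⟩,
      Real.artanh_tanh]
    linarith
  have hρ : rhoDist z₀ z = t := by
    rw [rhoDist_ofReal hz₀ hz.le (Real.tanh_lt_one _), Real.artanh_tanh]
    ring
  have hh := (hsub ⟨norm_ofReal_lt_one (hz₀.trans hz) (Real.tanh_lt_one _), hρ ▸ hts⟩).2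
  rw [hilbertDist_ofReal_eq_rhoDist hz₀ hz (Real.tanh_lt_one _), hρ] at hh
  exact lt_irrefl t hh
end
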